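/- Let A : ℕ → ℕ be defined by A(0) = 1, A(1) = 2, and A(n) = 1 + C(A(n−2)+1, 2) + A(n−2)·(A(n−1) − A(n−2)) for n ≥ 2, and for n ≥ 2 let E(n) = log(1 + 1/(2·A(n−1)) − A(n−2)/(2·A(n−1)) + 1/(A(n−1)·A(n−2))). Let φ = (1+√5)/2 and ψ = (1−√5)/2. Then for all n ≥ 2, log A(n) = (log 2)·(φⁿ − ψⁿ)/√5 + (1/√5)·∑_{i=2}^{n} E(i)·(φ^{n−i+1} − ψ^{n−i+1}). -/

import Mathlib

open Real

def A : ℕ → ℕ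
  | 0 => 1
  | 1 => 2
  | n + 2 => 1 + Nat.choose (A n + 1) 2 + A n * (A (n + 1) - A n)

noncomputable def E (n : ℕ) : ℝ :=
  Real.log (1 + 1 / (2 * (A (n - 1) : ℝ)) - (A (n - 2) : ℝ) / (2 * (A (n - 1) : ℝ))
    + 1 / ((A (n - 1) : ℝ) * (A (n - 2) : ℝ)))

noncomputable def φ : ℝ := (1 + Real.sqrt 5) / 2
noncomputable def ψ : ℝ := (1 - Real.sqrt 5) / 2

/-!
`E n` is exactly `log A(n) - log A(n-1) - log A(n-2)`, so `L n = log A(n)` satisfies the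
inhomogeneous Fibonacci recurrence `L (n+2) = L (n+1) + L n + E (n+2)` with `L 0 = 0` and
`L 1 = log 2`. Its solution is `L n = log 2 · F n + ∑_{i=2}^{n} E i · F (n-i+1)` with `F` the
Fibonacci numbers, and Binet's formula `F k = (φ^k - ψ^k)/√5` turns this into the closed form.
-/

open Finset

section FibonacciRecurrence

variable {R : Type*} [CommRing R]

theorem sum_Icc_mul_fib_add_two (e : ℕ → R) (n : ℕ) :
    ∑ i ∈ Icc 2 (n + 2), e i * Nat.fib (n + 2 - i + 1) =
      ∑ i ∈ Icc 2 (n + 1), e i * Nat.fib (n + 1 - i + 1) +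
        ∑ i ∈ Icc 2 n, e i * Nat.fib (n - i + 1) + e (n + 2) := by
  have h_lower : ∑ i ∈ Icc 2 n, e i * Nat.fib (n - i + 1) =
      ∑ i ∈ Icc 2 (n + 1), e i * Nat.fib (n + 1 - i) := by
    rw [← sum_subset (Icc_subset_Icc_right n.le_succ)]
    · refine sum_congr rfl fun i hi => ?_
      rw [Nat.sub_add_comm (mem_Icc.1 hi).2]
    · intro i hi hi'
      have : i = n + 1 := by simp only [mem_Icc] at hi hi'; omega
      simp [this]
  have h_split : ∀ i ∈ Icc 2 (n + 1), e i * Nat.fib (n + 2 - i + 1) =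
      e i * Nat.fib (n + 1 - i + 1) + e i * Nat.fib (n + 1 - i) := by
    intro i hi
    have : n + 2 - i + 1 = n + 1 - i + 2 := by simp only [mem_Icc] at hi; omega
    rw [this, Nat.fib_add_two]
    push_cast
    ring
  rw [sum_Icc_succ_top (by omega), sum_congr rfl h_split, sum_add_distrib, h_lower]
  simp

theorem eq_fib_mul_add_sum_of_add_two {u e : ℕ → R}
    (h : ∀ n, u (n + 2) = u (n + 1) + u n + e (n + 2)) (n : ℕ) :
    u n = u 0 * Nat.fib (n + 1) + (u 1 - u 0) * Nat.fib n +
      ∑ i ∈ Icc 2 n, e i * Nat.fib (n - i + 1) := by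
  induction n using Nat.twoStepInduction with
  | zero => simp
  | one => simp
  | more n ih₀ ih₁ =>
    have hf₂ : (Nat.fib (n + 1 + 1) : R) = Nat.fib n + Nat.fib (n + 1) := by
      rw [← Nat.cast_add, Nat.fib_add_two]
    have hf₃ : (Nat.fib (n + 2 + 1) : R) = Nat.fib (n + 1) + Nat.fib (n + 1 + 1) := by
      rw [← Nat.cast_add, Nat.fib_add_two]
    rw [h, ih₀, ih₁, sum_Icc_mul_fib_add_two]
    linear_combination -(u 1 - u 0) * hf₂ - u 0 * hf₃

end FibonacciRecurrence

theorem one_le_A (n : ℕ) : 1 ≤ A n := by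
  rcases n with _ | _ | n <;> simp only [A] <;> omega

theorem A_le_A_succ (n : ℕ) : A n ≤ A (n + 1) := by
  cases n with
  | zero => simp [A]
  | succ n =>
    have h_choose : A n ≤ (A n + 1).choose 2 := by
      rw [Nat.choose_succ_succ']; simp
    have h_mul : A (n + 1) - A n ≤ A n * (A (n + 1) - A n) :=
      Nat.le_mul_of_pos_left _ (one_le_A n)
    show A (n + 1) ≤ 1 + (A n + 1).choose 2 + A n * (A (n + 1) - A n)
    omega

theorem two_mul_A_add_two (n : ℕ) :
    2 * (A (n + 2) : ℝ) = 2 + A n - A n ^ 2 + 2 * A n * A (n + 1) := by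
  rw [A, Nat.cast_add, Nat.cast_add, Nat.cast_mul, Nat.cast_sub (A_le_A_succ n),
    Nat.cast_choose_two]
  push_cast
  ring

theorem E_add_two (n : ℕ) :
    E (n + 2) = Real.log (A (n + 2)) - Real.log (A (n + 1)) - Real.log (A n) := by
  have h₀ : (0 : ℝ) < A n := by exact_mod_cast one_le_A n
  have h₁ : (0 : ℝ) < A (n + 1) := by exact_mod_cast one_le_A (n + 1)
  have h₂ : (0 : ℝ) < A (n + 2) := by exact_mod_cast one_le_A (n + 2)
  have h_ratio : (A (n + 2) : ℝ) / (A (n + 1) * A n) =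
      1 + 1 / (2 * (A (n + 1) : ℝ)) - (A n : ℝ) / (2 * (A (n + 1) : ℝ))
        + 1 / ((A (n + 1) : ℝ) * (A n : ℝ)) := by
    field_simp
    linear_combination two_mul_A_add_two n
  rw [E, show n + 2 - 1 = n + 1 from rfl, Nat.add_sub_cancel, ← h_ratio,
    Real.log_div h₂.ne' (by positivity), Real.log_mul h₁.ne' h₀.ne']
  ring

theorem log_A_eq_sum_fib (n : ℕ) :
    Real.log (A n) = Real.log 2 * Nat.fib n + ∑ i ∈ Icc 2 n, E i * Nat.fib (n - i + 1) := by
  have h_rec (n : ℕ) :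
      Real.log (A (n + 2)) = Real.log (A (n + 1)) + Real.log (A n) + E (n + 2) := by
    rw [E_add_two]; ring
  rw [eq_fib_mul_add_sum_of_add_two (u := fun n => Real.log (A n)) h_rec n]
  norm_num [A]

theorem stmt_7 : ∀ n : ℕ, 2 ≤ n →
    Real.log (A n) =
      Real.log 2 * (φ ^ n - ψ ^ n) / Real.sqrt 5 +
        (1 / Real.sqrt 5) *
          ∑ i ∈ Finset.Icc 2 n, E i * (φ ^ (n - i + 1) - ψ ^ (n - i + 1)) := by
  intro n _
  have hφ : φ = goldenRatio := rfl
  have hψ : ψ = goldenConj := rfl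
  rw [log_A_eq_sum_fib, mul_sum, hφ, hψ]
  simp only [coe_fib_eq]
  congr 1
  · ring
  · exact sum_congr rfl fun i _ => by ring
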